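/- For the set M as above, the vector graph V_M contains a subgraph isomorphic to the Moser spindle; consequently χ(V_M) ≥ 4, and combined with 4-colorability, χ(V_M) = 4. -/

import Mathlib

noncomputable def rot (θ : ℝ) (u : ℂ) : ℂ := Complex.exp (θ * Complex.I) * u
noncomputable def angA : ℝ := Real.arccos (1 / (2 * Real.sqrt 3)) - Real.pi / 6
noncomputable def angB : ℝ := angA + Real.pi / 3

def MoserSpindle : SimpleGraph (Fin 7) :=
  SimpleGraph.fromRel (fun i j => (i, j) ∈
    ([(0,1),(0,2),(1,2),(1,3),(2,3),(0,4),(0,5),(4,5),(4,6),(5,6),(3,6)] : List (Fin 7 × Fin 7)))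

noncomputable def Mset (u : ℂ) : Set ℂ :=
  {u, rot angA u, rot (-angA) u, rot angB u, rot (-angB) u,
   rot angA u - rot angB u, rot (-angA) u - rot (-angB) u}

noncomputable def VM (u : ℂ) : SimpleGraph (Submodule.span ℤ (Mset u)) :=
  SimpleGraph.fromRel (fun x y => (x : ℂ) - (y : ℂ) ∈ Mset u)

/-! With `γ = arccos (1 / (2√3))` we have `α = γ - π/6` and `β = γ + π/6`, hence
`2 cos α + 2 cos β = 4 cos γ cos (π/6) = 1`: the vector `u` is the sum of its four rotations
`r_{±α}(u)`, `r_{±β}(u)`. Since `cos α, cos β = (3 ± √33)/12` and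
`√3 sin α, √3 sin β = (√33 ∓ 1)/4`, the irrationality of `√33` makes these four rotations
`ℤ`-linearly independent, so `V_M` is the Cayley graph of `ℤ⁴` whose generators are the
coordinate vectors of the seven elements of `M`. There the Moser spindle consists of the rhombi
`0, e₁, e₃, e₁ + e₃` and `0, -e₂, -e₄, -e₂ - e₄` with tips joined by the generator `(1, 1, 1, 1)`,
and `c ↦ c₁ + c₂ + 2c₃ + 2c₄ (mod 4)`, which vanishes on no generator, is a proper
`4`-colouring. -/

open Real

lemma Irrational.eq_zero_of_intCast_add_intCast_mul {x : ℝ} (hx : Irrational x) {p q : ℤ}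
    (h : (p : ℝ) + q * x = 0) : p = 0 ∧ q = 0 := by
  by_cases hq : q = 0
  · subst hq
    exact ⟨by simpa using h, rfl⟩
  · exact ((hx.intCast_mul hq).intCast_add p |>.ne_zero h).elim

lemma irrational_sqrt_33 : Irrational √33 :=
  irrational_sqrt_ofNat_iff.mpr fun ⟨r, hr⟩ =>
    Nat.not_exists_sq (m := 5) (by norm_num) (by norm_num) ⟨r, hr.symm⟩

lemma angA_eq : angA = arccos (√3 / 6) - π / 6 := by
  rw [angA, show 1 / (2 * √3) = √3 / 6 by
    field_simp; rw [sq_sqrt (by norm_num)]; norm_num]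

lemma angB_eq : angB = arccos (√3 / 6) + π / 6 := by
  rw [angB, angA_eq]; ring

lemma cos_arccos_sqrt_three_div_six : cos (arccos (√3 / 6)) = √3 / 6 :=
  cos_arccos (by linarith [sqrt_nonneg 3])
    (by nlinarith [sq_sqrt (show (0:ℝ) ≤ 3 by norm_num), sqrt_nonneg 3])

lemma sin_arccos_sqrt_three_div_six : sin (arccos (√3 / 6)) = √33 / 6 := by
  rw [sin_arccos, div_pow, sq_sqrt (by norm_num)]
  rw [sqrt_eq_iff_mul_self_eq] <;> nlinarith [sq_sqrt (show (0:ℝ) ≤ 33 by norm_num), sqrt_nonneg 33]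

lemma cos_angA : cos angA = (3 + √33) / 12 := by
  rw [angA_eq, cos_sub, cos_arccos_sqrt_three_div_six, sin_arccos_sqrt_three_div_six,
    cos_pi_div_six, sin_pi_div_six]
  linear_combination (1 / 12 : ℝ) * sq_sqrt (show (0:ℝ) ≤ 3 by norm_num)

lemma cos_angB : cos angB = (3 - √33) / 12 := by
  rw [angB_eq, cos_add, cos_arccos_sqrt_three_div_six, sin_arccos_sqrt_three_div_six,
    cos_pi_div_six, sin_pi_div_six]
  linear_combination (1 / 12 : ℝ) * sq_sqrt (show (0:ℝ) ≤ 3 by norm_num)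

lemma sqrt_three_mul_sin_angA : √3 * sin angA = (√33 - 1) / 4 := by
  rw [angA_eq, sin_sub, cos_arccos_sqrt_three_div_six, sin_arccos_sqrt_three_div_six,
    cos_pi_div_six, sin_pi_div_six]
  linear_combination (√33 - 1) / 12 * sq_sqrt (show (0:ℝ) ≤ 3 by norm_num)

lemma sqrt_three_mul_sin_angB : √3 * sin angB = (√33 + 1) / 4 := by
  rw [angB_eq, sin_add, cos_arccos_sqrt_three_div_six, sin_arccos_sqrt_three_div_six,
    cos_pi_div_six, sin_pi_div_six]
  linear_combination (√33 + 1) / 12 * sq_sqrt (show (0:ℝ) ≤ 3 by norm_num)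

lemma rot_add_rot_neg (θ : ℝ) (u : ℂ) : rot θ u + rot (-θ) u = 2 * cos θ * u := by
  simp only [rot, Complex.ofReal_neg, Complex.ofReal_cos, Complex.two_cos]
  ring

lemma cos_angA_add_cos_angB : cos angA + cos angB = 1 / 2 := by
  rw [cos_angA, cos_angB]; ring

noncomputable def spindleAngles : Fin 4 → ℝ := ![angA, -angA, angB, -angB]

noncomputable def latticeBasis (u : ℂ) (i : Fin 4) : ℂ := rot (spindleAngles i) u

lemma sum_latticeBasis (u : ℂ) : ∑ i, latticeBasis u i = u := by
  have h : ((cos angA : ℝ) : ℂ) + (cos angB : ℝ) = 1 / 2 := by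
    rw [← Complex.ofReal_add, cos_angA_add_cos_angB]; norm_num
  simp only [latticeBasis, spindleAngles, Fin.sum_univ_four, Matrix.cons_val]
  linear_combination rot_add_rot_neg angA u + rot_add_rot_neg angB u + 2 * u * h

lemma linearIndependent_exp_spindleAngles :
    LinearIndependent ℤ fun i => Complex.exp (spindleAngles i * Complex.I) := by
  rw [Fintype.linearIndependent_iff]
  intro g hg
  have hre := congrArg Complex.re hg
  have him := congrArg Complex.im hg
  simp only [spindleAngles, zsmul_eq_mul, Fin.sum_univ_four, Fin.isValue, Matrix.cons_val_zero,
    Matrix.cons_val_one, Matrix.cons_val, Complex.add_re, Complex.mul_re, Complex.intCast_re,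
    Complex.exp_ofReal_mul_I_re, Complex.intCast_im, Complex.exp_ofReal_mul_I_im, zero_mul,
    sub_zero, cos_neg, sin_neg, mul_neg, neg_zero, Complex.zero_re, Complex.add_im, Complex.mul_im, add_zero,
    Complex.zero_im] at hre him
  obtain ⟨h₁, h₂⟩ := irrational_sqrt_33.eq_zero_of_intCast_add_intCast_mul
    (p := 3 * (g 0 + g 1 + g 2 + g 3)) (q := g 0 + g 1 - g 2 - g 3) (by
      rw [cos_angA, cos_angB] at hre
      push_cast
      linear_combination 12 * hre)
  obtain ⟨h₃, h₄⟩ := irrational_sqrt_33.eq_zero_of_intCast_add_intCast_mul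
    (p := g 1 - g 0 + g 2 - g 3) (q := g 0 - g 1 + g 2 - g 3) (by
      push_cast
      linear_combination 4 * √3 * him - 4 * (g 0 - g 1 : ℝ) * sqrt_three_mul_sin_angA
        - 4 * (g 2 - g 3 : ℝ) * sqrt_three_mul_sin_angB)
  intro i
  fin_cases i <;> simp only [Fin.zero_eta, Fin.mk_one, Fin.reduceFinMk] <;> omega

lemma linearIndependent_latticeBasis {u : ℂ} (hu : u ≠ 0) :
    LinearIndependent ℤ (latticeBasis u) :=
  linearIndependent_exp_spindleAngles.map' (LinearMap.mulRight ℤ u)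
    (LinearMap.ker_eq_bot.mpr (mul_left_injective₀ hu))

def spindleGens : Finset (Fin 4 → ℤ) :=
  {![1, 1, 1, 1], ![1, 0, 0, 0], ![0, 1, 0, 0], ![0, 0, 1, 0], ![0, 0, 0, 1], ![1, 0, -1, 0],
    ![0, 1, 0, -1]}

lemma Mset_eq_image (u : ℂ) :
    Mset u = Fintype.linearCombination ℤ (latticeBasis u) '' spindleGens := by
  have hu : Fintype.linearCombination ℤ (latticeBasis u) ![1, 1, 1, 1] = u := by
    simpa [Fintype.linearCombination_apply, Fin.sum_univ_four] using sum_latticeBasis u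
  simp only [spindleGens, Finset.coe_insert, Finset.coe_singleton, Set.image_insert_eq,
    Set.image_singleton, hu]
  simp [Mset, Fintype.linearCombination_apply, Fin.sum_univ_four, latticeBasis, spindleAngles,
    sub_eq_add_neg]

lemma span_Mset_eq_range (u : ℂ) :
    Submodule.span ℤ (Mset u) =
      LinearMap.range (Fintype.linearCombination ℤ (latticeBasis u)) := by
  refine le_antisymm ?_ ?_
  · rw [Submodule.span_le, Mset_eq_image]
    exact Set.image_subset_range _ _
  · rw [Fintype.range_linearCombination]
    refine Submodule.span_mono ?_
    rintro _ ⟨i, rfl⟩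
    fin_cases i <;> simp [Mset, latticeBasis, spindleAngles]

noncomputable def latticeEquiv {u : ℂ} (hu : u ≠ 0) :
    (Fin 4 → ℤ) ≃ₗ[ℤ] Submodule.span ℤ (Mset u) :=
  (LinearEquiv.ofInjective _
    (linearIndependent_latticeBasis hu).fintypeLinearCombination_injective).trans
      (LinearEquiv.ofEq _ _ (span_Mset_eq_range u).symm)

lemma coe_latticeEquiv {u : ℂ} (hu : u ≠ 0) (c : Fin 4 → ℤ) :
    (latticeEquiv hu c : ℂ) = Fintype.linearCombination ℤ (latticeBasis u) c :=
  rfl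

lemma coe_latticeEquiv_mem_Mset_iff {u : ℂ} (hu : u ≠ 0) (c : Fin 4 → ℤ) :
    (latticeEquiv hu c : ℂ) ∈ Mset u ↔ c ∈ spindleGens := by
  rw [coe_latticeEquiv, Mset_eq_image,
    (linearIndependent_latticeBasis hu).fintypeLinearCombination_injective.mem_set_image,
    Finset.mem_coe]

namespace SimpleGraph

variable {G H K : Type*} [AddGroup G] [AddGroup H] [AddGroup K]

def cayley (S : Set G) : SimpleGraph G := fromRel fun x y => x - y ∈ S

lemma cayley_adj {S : Set G} {x y : G} :
    (cayley S).Adj x y ↔ x ≠ y ∧ (x - y ∈ S ∨ y - x ∈ S) :=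
  fromRel_adj _ _ _

instance [DecidableEq G] (S : Finset G) : DecidableRel (cayley (S : Set G)).Adj :=
  fun _ _ => decidable_of_iff' _ cayley_adj

def Iso.cayleyOfAddEquiv (e : G ≃+ H) {S : Set G} {T : Set H} (hST : ∀ x, e x ∈ T ↔ x ∈ S) :
    cayley S ≃g cayley T where
  toEquiv := e.toEquiv
  map_rel_iff' := by
    intro x y
    simp only [cayley_adj, AddEquiv.toEquiv_eq_coe, EquivLike.coe_coe, ne_eq,
      e.injective.eq_iff, ← map_sub, hST]

def Coloring.cayleyOfAddMonoidHom {S : Set G} (χ : G →+ K) (hχ : ∀ s ∈ S, χ s ≠ 0) :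
    (cayley S).Coloring K :=
  Coloring.mk χ fun {x y} hxy hχxy => by
    obtain ⟨-, hS | hS⟩ := cayley_adj.mp hxy
    · exact hχ _ hS (by rw [map_sub, hχxy, sub_self])
    · exact hχ _ hS (by rw [map_sub, hχxy, sub_self])

lemma Coloring.eq_of_diamond {V : Type*} {Γ : SimpleGraph V} (C : Γ.Coloring (Fin 3))
    {a b c d : V} (hab : Γ.Adj a b) (hac : Γ.Adj a c) (hbc : Γ.Adj b c) (hbd : Γ.Adj b d)
    (hcd : Γ.Adj c d) :
    C a = C d := by
  have := C.valid hab; have := C.valid hac; have := C.valid hbc; have := C.valid hbd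
  have := C.valid hcd
  omega

end SimpleGraph

open SimpleGraph

noncomputable def cayleyIsoVM {u : ℂ} (hu : u ≠ 0) :
    cayley (spindleGens : Set (Fin 4 → ℤ)) ≃g VM u :=
  Iso.cayleyOfAddEquiv (T := {x | (x : ℂ) ∈ Mset u}) (latticeEquiv hu).toAddEquiv
    (coe_latticeEquiv_mem_Mset_iff hu)

instance : DecidableRel MoserSpindle.Adj := fun _ _ => decidable_of_iff' _ (fromRel_adj _ _ _)

lemma moserSpindle_not_colorable_three : ¬ MoserSpindle.Colorable 3 := by
  rintro ⟨C⟩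
  have h₃ : C 0 = C 3 :=
    C.eq_of_diamond (b := 1) (c := 2) (by decide) (by decide) (by decide) (by decide) (by decide)
  have h₆ : C 0 = C 6 :=
    C.eq_of_diamond (b := 4) (c := 5) (by decide) (by decide) (by decide) (by decide) (by decide)
  exact C.valid (show MoserSpindle.Adj 3 6 by decide) (h₃.symm.trans h₆)

def spindleVertices : Fin 7 → Fin 4 → ℤ :=
  ![0, ![1, 0, 0, 0], ![0, 0, 1, 0], ![1, 0, 1, 0], ![0, -1, 0, 0], ![0, 0, 0, -1], ![0, -1, 0, -1]]

def moserSpindleEmbedding : MoserSpindle ↪g cayley (spindleGens : Set (Fin 4 → ℤ)) where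
  toFun := spindleVertices
  inj' := by decide
  map_rel_iff' := by decide

def spindleColoring : (cayley (spindleGens : Set (Fin 4 → ℤ))).Coloring (ZMod 4) :=
  Coloring.cayleyOfAddMonoidHom (Fintype.linearCombination ℤ ![1, 1, 2, 2]).toAddMonoidHom
    (by decide)

lemma chromaticNumber_cayley_spindleGens :
    (cayley (spindleGens : Set (Fin 4 → ℤ))).chromaticNumber = 4 := by
  refine chromaticNumber_eq_iff_colorable_not_colorable.mpr ⟨?_, fun h3 => ?_⟩
  · simpa using spindleColoring.colorable
  · exact moserSpindle_not_colorable_three (h3.of_hom moserSpindleEmbedding.toHom)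

theorem stmt11 (u : ℂ) (hu : ‖u‖ = 1) :
    Nonempty (MoserSpindle ↪g VM u) ∧ (VM u).chromaticNumber = 4 := by
  have φ := cayleyIsoVM (u := u) (norm_ne_zero_iff.mp (hu ▸ one_ne_zero))
  exact ⟨⟨φ.toEmbedding.comp moserSpindleEmbedding⟩,
    (chromaticNumber_congr φ).symm.trans chromaticNumber_cayley_spindleGens⟩
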